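/- Let f : F₂^d → F₂ be bipermutive with generating function g : F₂^{d-2} → F₂, let F be the corresponding no-boundary CA and S_F its associated Latin square of order N = 2^{d-1}. Then the main diagonal {(i,i) : 1 ≤ i ≤ N} of S_F is a transversal if and only if the periodic-boundary CA T : F₂^{d-1} → F₂^{d-1} with local rule g (of diameter d-2) on a cyclic array of d-1 cells is a bijection. -/
import Mathlib


/-- No-boundary CA of diameter `d` on `2(d-1)` cells. -/
def nbca (d : ℕ) (hd : 2 ≤ d) (f : (Fin d → ZMod 2) → ZMod 2)
    (x : Fin ((d-1)+(d-1)) → ZMod 2) : Fin (d-1) → ZMod 2 :=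
  fun i => f fun k => x ⟨i.val + k.val, by have := i.isLt; have := k.isLt; omega⟩

/-- Periodic-boundary CA with rule `g` of diameter `m` on `n` cells. -/
def pbca (n m : ℕ) (hn : 0 < n) (g : (Fin m → ZMod 2) → ZMod 2)
    (x : Fin n → ZMod 2) : Fin n → ZMod 2 :=
  fun i => g fun k => x ⟨(i.val + k.val) % n, Nat.mod_lt _ hn⟩

lemma app_mod (n : ℕ) (hn : 0 < n) (y : Fin n → ZMod 2) (v : ℕ) (h : v < n + n) :
    Fin.append y y ⟨v, h⟩ = y ⟨v % n, Nat.mod_lt _ hn⟩ := by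
  by_cases hv : v < n
  · have e : (⟨v, h⟩ : Fin (n+n)) = Fin.castAdd n ⟨v, hv⟩ := rfl
    rw [e, Fin.append_left]
    congr 1
    exact Fin.ext (Nat.mod_eq_of_lt hv).symm
  · have e : (⟨v, h⟩ : Fin (n+n)) = Fin.natAdd n ⟨v - n, by omega⟩ := Fin.ext (by simp; omega)
    rw [e, Fin.append_right]
    congr 1
    apply Fin.ext
    show (v - n : ℕ) = v % n
    rw [Nat.mod_eq_sub_mod (by omega), Nat.mod_eq_of_lt (by omega)]

theorem stmt2 (d : ℕ) (hd : 2 ≤ d) (f : (Fin d → ZMod 2) → ZMod 2)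
    (g : (Fin (d-2) → ZMod 2) → ZMod 2)
    (hf : ∀ x : Fin d → ZMod 2,
      f x = x ⟨0, by omega⟩ + g (fun k => x ⟨k.val + 1, by have := k.isLt; omega⟩)
          + x ⟨d-1, by omega⟩)
    (ψ : Fin (2^(d-1)) ≃ (Fin (d-1) → ZMod 2))
    (S : Fin (2^(d-1)) → Fin (2^(d-1)) → Fin (2^(d-1)))
    (hS : ∀ i j, S i j = ψ.symm (nbca d hd f (Fin.append (ψ i) (ψ j)))) :
    Function.Bijective (fun i => S i i)
      ↔ Function.Bijective (pbca (d-1) (d-2) (by omega) g) := by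
  have hn0 : 0 < d - 1 := by omega
  haveI : NeZero (d - 1) := ⟨by omega⟩
  set P := pbca (d-1) (d-2) (by omega : 0 < d - 1) g with hP
  -- key pointwise computation
  have key : ∀ (y : Fin (d-1) → ZMod 2) (i : Fin (d-1)),
      nbca d hd f (Fin.append y y) i = P y (i + 1) := by
    intro y i
    have h2 : ∀ a : ZMod 2, a + a = 0 := by decide
    unfold nbca
    rw [hf]
    have e1 : Fin.append y y ⟨i.val + 0, by have := i.isLt; omega⟩ = y i := by
      rw [app_mod (d-1) hn0]
      congr 1
      apply Fin.ext
      show (i.val + 0) % (d-1) = i.val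
      rw [Nat.add_zero, Nat.mod_eq_of_lt i.isLt]
    have e3 : Fin.append y y ⟨i.val + (d-1), by have := i.isLt; omega⟩ = y i := by
      rw [app_mod (d-1) hn0]
      congr 1
      apply Fin.ext
      show (i.val + (d-1)) % (d-1) = i.val
      rw [Nat.add_mod_right, Nat.mod_eq_of_lt i.isLt]
    have e2 : g (fun k : Fin (d-2) =>
          Fin.append y y ⟨i.val + (k.val + 1), by have := i.isLt; have := k.isLt; omega⟩)
        = P y (i + 1) := by
      rw [hP]
      show _ = g _
      congr 1
      funext k
      rw [app_mod (d-1) hn0]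
      congr 1
      apply Fin.ext
      show (i.val + (k.val + 1)) % (d-1) = ((i + 1 : Fin (d-1)).val + k.val) % (d-1)
      rw [Fin.add_def]
      simp only [Fin.val_one']
      rw [Nat.mod_add_mod, Nat.add_right_comm i.val (1 % (d-1)) k.val, Nat.add_mod_mod]
      congr 1
    rw [e1, e2, e3]
    calc y i + P y (i + 1) + y i
        = P y (i + 1) + (y i + y i) := by ring
      _ = P y (i + 1) := by rw [h2, add_zero]
  let E : (Fin (d-1) → ZMod 2) ≃ (Fin (d-1) → ZMod 2) :=
    { toFun := fun v j => v (j + 1)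
      invFun := fun v j => v (j - 1)
      left_inv := fun v => by funext j; simp
      right_inv := fun v => by funext j; simp }
  have hdiag : (fun i => S i i) = ⇑ψ.symm ∘ ⇑E ∘ P ∘ ⇑ψ := by
    funext i
    rw [hS]
    simp only [Function.comp_apply]
    congr 1
    funext j
    exact key (ψ i) j
  rw [hdiag]
  simp only [Equiv.comp_bijective, Equiv.bijective_comp,
    EquivLike.comp_bijective, EquivLike.bijective_comp]
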